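/- Let s₁ ∈ (0,1), put λ = ω_p(s₁), let s₂ ∈ (H_q(λ), 1), and let t satisfy 1 ≤ t ≤ λ. Then F(τ(s₁,s₂,t)) < (p−q)·A(s₂). -/

import Mathlib

noncomputable section

open Real Set

/-- `H r z = r·z^(r-1) - (r-1)·z^r`. -/
def H (r z : ℝ) : ℝ := r * z ^ (r - 1) - (r - 1) * z ^ r

/-- `ω` is the inverse of `H r`, mapping `(0,1]` into `[1, r/(r-1))`,
    so that `H r (ω s) = s` for `s ∈ (0,1]`. -/
def IsOmega (r : ℝ) (ω : ℝ → ℝ) : Prop :=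
  ∀ s ∈ Set.Ioc (0 : ℝ) 1, ω s ∈ Set.Ico (1 : ℝ) (r / (r - 1)) ∧ H r (ω s) = s

/-- `τ(s₁,s₂,t) = ((p-q)/p)·(t^p - s₁)/(t^(p-q) - s₁/s₂)`. -/
def tau (p q s₁ s₂ t : ℝ) : ℝ :=
  ((p - q) / p) * ((t ^ p - s₁) / (t ^ (p - q) - s₁ / s₂))

/-- `F(τ)` from the paper, where `ω` plays the role of `ω_q`. -/
def Ffun (p q : ℝ) (ω : ℝ → ℝ) (τ : ℝ) : ℝ :=
  (τ / (1 - ω τ)) * (p - (q * (p - 1) / (q - 1)) * ω τ)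
    - q * (p * ω τ ^ (q - 1) - (p - 1) * ω τ ^ q)

/-- `A(s)` from the paper, where `ω` plays the role of `ω_q`. -/
def Afun (q : ℝ) (ω : ℝ → ℝ) (s : ℝ) : ℝ :=
  s * (ω s / ((q - 1) * (ω s - 1)) + ω s ^ q / s)

/-!
With `w = ω_q(τ)` one has `τ = H_q(w) = w^(q-1)(q - (q-1)w)`, and substituting this into `F` and `A`
gives `F(τ) = (p-q)·A(τ)` with `A(τ) = w^q/((q-1)(w-1))`. Since `ω_q` is decreasing and
`w ↦ w^q/((q-1)(w-1))` is decreasing on `(1, q/(q-1))`, `A` is increasing on `(0,1)`, so it suffices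
that `τ < s₂`, i.e. `((p-q)/p)(t^p - s₁) < s₂ t^(p-q) - s₁`. The difference of the two sides is
antitone in `t ≥ 1`, and at `t = λ = ω_p(s₁)` it equals `λ^(p-q)(s₂ - H_q(λ)) > 0` because
`λ^(p-q) H_q(λ) = ((p-q)/p) λ^p + (q/p) H_p(λ)` and `H_p(λ) = s₁`.
-/

lemma H_one (r : ℝ) : H r 1 = 1 := by
  simp [H]

lemma H_eq_rpow_mul {r z : ℝ} (hz : 0 < z) : H r z = z ^ (r - 1) * (r - (r - 1) * z) := by
  rw [H, Real.rpow_sub_one hz.ne']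
  field_simp

lemma H_pos {r z : ℝ} (hr : 1 < r) (hz : 0 < z) (hzr : z < r / (r - 1)) : 0 < H r z := by
  rw [H_eq_rpow_mul hz]
  have : (r - 1) * z < r := by rwa [lt_div_iff₀ (by linarith), mul_comm] at hzr
  exact mul_pos (by positivity) (by linarith)

lemma rpow_sub_mul_H {p q L : ℝ} (hp : p ≠ 0) (hL : 0 < L) :
    L ^ (p - q) * H q L = (p - q) / p * L ^ p + q / p * H p L := by
  have hpq : L ^ p = L ^ (p - q) * L ^ q := by rw [← Real.rpow_add hL]; ring_nf
  have hp1 : L ^ (p - 1) = L ^ (p - q) * L ^ (q - 1) := by rw [← Real.rpow_add hL]; ring_nf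
  simp only [H]
  rw [hpq, hp1]
  field_simp
  ring

lemma H_antitoneOn {r : ℝ} (hr : 1 ≤ r) : AntitoneOn (H r) (Ici 1) := by
  have hderiv : ∀ z ∈ Ioi (1 : ℝ),
      HasDerivAt (H r) (r * ((r - 1) * z ^ (r - 1 - 1)) - (r - 1) * (r * z ^ (r - 1))) z := by
    intro z hz
    have hz0 : z ≠ 0 := by linarith [mem_Ioi.1 hz]
    exact ((Real.hasDerivAt_rpow_const (Or.inl hz0)).const_mul r).sub
      ((Real.hasDerivAt_rpow_const (Or.inl hz0)).const_mul (r - 1))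
  have hcont : ContinuousOn (H r) (Ici 1) := by
    unfold H
    exact ContinuousOn.sub (continuousOn_const.mul (continuousOn_id.rpow_const
      fun z hz => Or.inl (zero_lt_one.trans_le (mem_Ici.1 hz)).ne')) (continuousOn_const.mul
      (continuousOn_id.rpow_const fun z hz => Or.inl (zero_lt_one.trans_le (mem_Ici.1 hz)).ne'))
  refine antitoneOn_of_deriv_nonpos (convex_Ici 1) hcont ?_ ?_ <;> rw [interior_Ici]
  · exact fun z hz => (hderiv z hz).differentiableAt.differentiableWithinAt
  · intro z hz
    have hz1 : 1 < z := hz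
    rw [(hderiv z hz).deriv, Real.rpow_sub_one (by linarith : z ≠ 0) (r - 1)]
    have hzr : 0 < z ^ (r - 1) := by positivity
    have : r * ((r - 1) * (z ^ (r - 1) / z)) - (r - 1) * (r * z ^ (r - 1))
        = r * (r - 1) * (z ^ (r - 1) / z) * (1 - z) := by field_simp
    rw [this]
    exact mul_nonpos_of_nonneg_of_nonpos (by positivity) (by linarith)

namespace IsOmega

variable {r : ℝ} {ω : ℝ → ℝ}

lemma one_lt (hω : IsOmega r ω) {s : ℝ} (hs : s ∈ Ioo 0 1) : 1 < ω s := by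
  obtain ⟨hmem, hH⟩ := hω s (Ioo_subset_Ioc_self hs)
  refine lt_of_le_of_ne hmem.1 fun h => ?_
  rw [← h, H_one] at hH
  exact hs.2.ne' hH

lemma strictAntiOn (hr : 1 ≤ r) (hω : IsOmega r ω) : StrictAntiOn ω (Ioc 0 1) := by
  intro s hs s' hs' hss'
  by_contra! h
  have := H_antitoneOn hr (hω s hs).1.1 (hω s' hs').1.1 h
  rw [(hω s hs).2, (hω s' hs').2] at this
  linarith

end IsOmega

/-- The common expression of `A` and `F / (p - q)` in the variable `w = ω_q(·)`. -/
def Aω (q w : ℝ) : ℝ := w ^ q / ((q - 1) * (w - 1))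

lemma Aω_strictAntiOn {q : ℝ} (hq : 1 < q) : StrictAntiOn (Aω q) (Ioo 1 (q / (q - 1))) := by
  have hq1 : 0 < q - 1 := by linarith
  have hderiv : ∀ w ∈ Ioo 1 (q / (q - 1)), HasDerivAt (Aω q)
      ((q * w ^ (q - 1) * ((q - 1) * (w - 1)) - w ^ q * (q - 1)) / ((q - 1) * (w - 1)) ^ 2) w := by
    intro w hw
    have hw1 : 1 < w := hw.1
    have hden : HasDerivAt (fun w : ℝ => (q - 1) * (w - 1)) (q - 1) w := by
      simpa using ((hasDerivAt_id w).sub_const 1).const_mul (q - 1)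
    exact (Real.hasDerivAt_rpow_const (Or.inl (by positivity))).div hden (by positivity)
  refine strictAntiOn_of_deriv_neg (convex_Ioo _ _)
    (fun w hw => (hderiv w hw).continuousAt.continuousWithinAt) fun w hw => ?_
  rw [interior_Ioo] at hw
  obtain ⟨hw1, hwq⟩ := hw
  have hw : (q - 1) * w < q := by rwa [lt_div_iff₀ hq1, mul_comm] at hwq
  rw [(hderiv w ⟨hw1, hwq⟩).deriv, Real.rpow_sub_one (by linarith : w ≠ 0)]
  have hwq0 : 0 < w ^ q := by positivity
  have : q * (w ^ q / w) * ((q - 1) * (w - 1)) - w ^ q * (q - 1)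
      = (q - 1) * (w ^ q / w) * ((q - 1) * w - q) := by field_simp; ring
  rw [this]
  exact div_neg_of_neg_of_pos (mul_neg_of_pos_of_neg (by positivity) (by linarith))
    (pow_pos (mul_pos hq1 (by linarith)) 2)

section Omega

variable {q : ℝ} {ω : ℝ → ℝ}

lemma Afun_eq_Aω (hq : 1 < q) (hω : IsOmega q ω) {s : ℝ} (hs : s ∈ Ioo 0 1) :
    Afun q ω s = Aω q (ω s) := by
  have hw := hω.one_lt hs
  have hs_eq : s = ω s ^ (q - 1) * (q - (q - 1) * ω s) := by
    rw [← H_eq_rpow_mul (by linarith), (hω s (Ioo_subset_Ioc_self hs)).2]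
  have hq1 : q - 1 ≠ 0 := by linarith
  have hw1 : ω s - 1 ≠ 0 := by linarith
  rw [Afun, Aω, mul_add, mul_div_cancel₀ _ hs.1.ne']
  nth_rw 1 [hs_eq]
  rw [Real.rpow_sub_one (by linarith : ω s ≠ 0)]
  field_simp
  ring

lemma Ffun_eq_mul_Afun (p : ℝ) (hq : 1 < q) (hω : IsOmega q ω) {τ : ℝ} (hτ : τ ∈ Ioo 0 1) :
    Ffun p q ω τ = (p - q) * Afun q ω τ := by
  have hw := hω.one_lt hτ
  have hτ_eq : τ = ω τ ^ (q - 1) * (q - (q - 1) * ω τ) := by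
    rw [← H_eq_rpow_mul (by linarith), (hω τ (Ioo_subset_Ioc_self hτ)).2]
  have hq1 : q - 1 ≠ 0 := by linarith
  have hw1 : 1 - ω τ ≠ 0 := by linarith
  have hw1' : ω τ - 1 ≠ 0 := by linarith
  rw [Afun_eq_Aω hq hω hτ, Ffun, Aω]
  nth_rw 1 [hτ_eq]
  rw [Real.rpow_sub_one (by linarith : ω τ ≠ 0)]
  field_simp
  ring

lemma Afun_strictMonoOn (hq : 1 < q) (hω : IsOmega q ω) : StrictMonoOn (Afun q ω) (Ioo 0 1) := by
  intro s hs s' hs' hss'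
  rw [Afun_eq_Aω hq hω hs, Afun_eq_Aω hq hω hs']
  have hmem : ∀ x ∈ Ioo (0 : ℝ) 1, ω x ∈ Ioo 1 (q / (q - 1)) := fun x hx =>
    ⟨hω.one_lt hx, (hω x (Ioo_subset_Ioc_self hx)).1.2⟩
  exact Aω_strictAntiOn hq (hmem s' hs') (hmem s hs)
    (hω.strictAntiOn hq.le (Ioo_subset_Ioc_self hs) (Ioo_subset_Ioc_self hs') hss')

end Omega

lemma div_sub_one_lt_div_sub_one {p q : ℝ} (hq : 1 < q) (hqp : q < p) :
    p / (p - 1) < q / (q - 1) := by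
  rw [div_lt_div_iff₀ (by linarith) (by linarith)]
  linarith

section Tau

variable {p q s₁ s₂ t : ℝ}

lemma antitoneOn_mul_rpow_sub_div_mul_rpow (hq : 0 ≤ q) (hqp : q < p) (hc : s₂ ≤ 1) :
    AntitoneOn (fun t : ℝ => s₂ * t ^ (p - q) - (p - q) / p * t ^ p) (Ici 1) := by
  have hp : 0 < p := by linarith
  have hderiv : ∀ z ∈ Ioi (1 : ℝ), HasDerivAt (fun t : ℝ => s₂ * t ^ (p - q) - (p - q) / p * t ^ p)
      (s₂ * ((p - q) * z ^ (p - q - 1)) - (p - q) / p * (p * z ^ (p - 1))) z := by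
    intro z hz
    have hz0 : z ≠ 0 := by linarith [mem_Ioi.1 hz]
    exact ((Real.hasDerivAt_rpow_const (Or.inl hz0)).const_mul s₂).sub
      ((Real.hasDerivAt_rpow_const (Or.inl hz0)).const_mul ((p - q) / p))
  have hcont : ContinuousOn (fun t : ℝ => s₂ * t ^ (p - q) - (p - q) / p * t ^ p) (Ici 1) :=
    ContinuousOn.sub (continuousOn_const.mul (continuousOn_id.rpow_const
      fun z hz => Or.inl (zero_lt_one.trans_le (mem_Ici.1 hz)).ne')) (continuousOn_const.mul
      (continuousOn_id.rpow_const fun z hz => Or.inl (zero_lt_one.trans_le (mem_Ici.1 hz)).ne'))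
  refine antitoneOn_of_deriv_nonpos (convex_Ici 1) hcont ?_ ?_ <;> rw [interior_Ici]
  · exact fun z hz => (hderiv z hz).differentiableAt.differentiableWithinAt
  · intro z hz
    have hz0 : 0 < z := by linarith [mem_Ioi.1 hz]
    rw [(hderiv z hz).deriv]
    have hzq : 1 ≤ z ^ q := Real.one_le_rpow (le_of_lt hz) hq
    have hsplit : z ^ (p - 1) = z ^ (p - q - 1) * z ^ q := by rw [← Real.rpow_add hz0]; ring_nf
    have : s₂ * ((p - q) * z ^ (p - q - 1)) - (p - q) / p * (p * z ^ (p - 1))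
        = (p - q) * z ^ (p - q - 1) * (s₂ - z ^ q) := by rw [hsplit]; field_simp
    rw [this]
    exact mul_nonpos_of_nonneg_of_nonpos (mul_nonneg (by linarith) (by positivity)) (by linarith)

lemma div_mul_rpow_sub_lt_mul_rpow_sub (hq : 0 ≤ q) (hqp : q < p) {L : ℝ} (hL : 0 < L)
    (hHp : H p L = s₁) (hHq : H q L < s₂) (hs₂ : s₂ ≤ 1) (ht : 1 ≤ t) (htL : t ≤ L) :
    (p - q) / p * (t ^ p - s₁) < s₂ * t ^ (p - q) - s₁ := by
  have hmono := antitoneOn_mul_rpow_sub_div_mul_rpow hq hqp hs₂ (mem_Ici.2 ht)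
    (mem_Ici.2 (ht.trans htL)) htL
  have hp : p ≠ 0 := by linarith
  have hid := rpow_sub_mul_H (q := q) hp hL
  have hgap : L ^ (p - q) * H q L < L ^ (p - q) * s₂ :=
    mul_lt_mul_of_pos_left hHq (by positivity)
  have hs₁ : q / p * s₁ = q / p * H p L := by rw [hHp]
  have : (p - q) / p * (t ^ p - s₁) = (p - q) / p * t ^ p - s₁ + q / p * s₁ := by
    field_simp; ring
  simp only at hmono
  linarith

lemma tau_mem_Ioo (hq : 0 ≤ q) (hqp : q < p) (hs₁ : s₁ < 1) (hs₂ : 0 < s₂) (ht : 1 ≤ t)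
    (hgap : (p - q) / p * (t ^ p - s₁) < s₂ * t ^ (p - q) - s₁) :
    tau p q s₁ s₂ t ∈ Ioo 0 s₂ := by
  have hnum : 0 < (p - q) / p * (t ^ p - s₁) :=
    mul_pos (div_pos (by linarith) (by linarith))
      (by linarith [Real.one_le_rpow ht (by linarith : 0 ≤ p)])
  have hden : t ^ (p - q) - s₁ / s₂ = (s₂ * t ^ (p - q) - s₁) / s₂ := by field_simp
  have htau : tau p q s₁ s₂ t = s₂ * ((p - q) / p * (t ^ p - s₁) / (s₂ * t ^ (p - q) - s₁)) := by
    rw [tau, hden]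
    field_simp
  rw [htau]
  have hfrac : (p - q) / p * (t ^ p - s₁) / (s₂ * t ^ (p - q) - s₁) ∈ Ioo 0 1 :=
    ⟨div_pos hnum (by linarith), (div_lt_one (by linarith)).2 hgap⟩
  exact ⟨mul_pos hs₂ hfrac.1, mul_lt_of_lt_one_right hs₂ hfrac.2⟩

end Tau

/-- if `s₁ ∈ (0,1)`, `λ = ω_p(s₁)`, `s₂ ∈ (H_q(λ), 1)` and
`1 ≤ t ≤ λ`, then `F(τ(s₁,s₂,t)) < (p−q)·A(s₂)`. -/
theorem stmt_18 (p q : ℝ) (hq : 1 < q) (hqp : q < p)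
    (ωp ωq : ℝ → ℝ) (hωp : IsOmega p ωp) (hωq : IsOmega q ωq)
    (s₁ : ℝ) (hs₁ : s₁ ∈ Set.Ioo (0 : ℝ) 1)
    (s₂ : ℝ) (hs₂ : s₂ ∈ Set.Ioo (H q (ωp s₁)) 1)
    (t : ℝ) (ht1 : 1 ≤ t) (ht2 : t ≤ ωp s₁) :
    Ffun p q ωq (tau p q s₁ s₂ t) < (p - q) * Afun q ωq s₂ := by
  obtain ⟨⟨hL1, hLp⟩, hHL⟩ := hωp s₁ (Ioo_subset_Ioc_self hs₁)
  have hL0 : 0 < ωp s₁ := by linarith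
  have hs₂0 : 0 < s₂ :=
    (H_pos hq hL0 (hLp.trans (div_sub_one_lt_div_sub_one hq hqp))).trans hs₂.1
  have hτ : tau p q s₁ s₂ t ∈ Ioo 0 s₂ :=
    tau_mem_Ioo (by linarith) hqp hs₁.2 hs₂0 ht1
      (div_mul_rpow_sub_lt_mul_rpow_sub (by linarith) hqp hL0 hHL hs₂.1 hs₂.2.le ht1 ht2)
  rw [Ffun_eq_mul_Afun p hq hωq ⟨hτ.1, hτ.2.trans hs₂.2⟩]
  exact mul_lt_mul_of_pos_left
    (Afun_strictMonoOn hq hωq ⟨hτ.1, hτ.2.trans hs₂.2⟩ ⟨hs₂0, hs₂.2⟩ hτ.2) (by linarith)
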